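/- Over Z/2, for every odd integer a ≥ 3, the 2-cochain ε_{⟨a,a+2⟩} := Σ_{r=0}^{(a−1)/2} e_{a−2r} ∧ e_{a+2r+2} is a cocycle: δ₁(ε_{⟨a,a+2⟩}) = 0. -/
import Mathlib


noncomputable section

/-- Ground field `Z/2`. -/
abbrev K2 := ZMod 2

/-- The free `Z/2`-module on basis `(e_i)_{i ≥ 1}`. -/
abbrev V1 := {i : ℕ // 1 ≤ i} →₀ K2

/-- The exterior algebra over `Z/2` on the space with basis `(e_i)_{i ≥ 1}`. -/
abbrev Lam1 := ExteriorAlgebra K2 V1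

/-- The generator `e_i` (defined to be `0` for the irrelevant case `i = 0`). -/
noncomputable def E (i : ℕ) : Lam1 :=
  if h : 1 ≤ i then ExteriorAlgebra.ι K2 (Finsupp.single (⟨i, h⟩ : {i : ℕ // 1 ≤ i}) 1)
  else 0

/-- The coboundary of a generator:
`δ₁(e_i) = Σ_{a+b=i, 1 ≤ a < b} (a+b) e_a ∧ e_b`, coefficients mod 2. -/
noncomputable def δE (i : ℕ) : Lam1 :=
  ∑ a ∈ Finset.Ico 1 i, if a < i - a then (i : K2) • (E a * E (i - a)) else 0

lemma Lam1.add_self (x : Lam1) : x + x = 0 := by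
  have h : ((2 : ℕ) : K2) • x = (2 : ℕ) • x := Nat.cast_smul_eq_nsmul K2 2 x
  have h2 : ((2 : ℕ) : K2) = 0 := by decide
  rw [h2, zero_smul, two_smul] at h
  exact h.symm

lemma E_mul_self (i : ℕ) : E i * E i = 0 := by
  unfold E; split
  · exact ExteriorAlgebra.ι_sq_zero _
  · simp

lemma E_mul_comm (i j : ℕ) : E i * E j = E j * E i := by
  unfold E
  split <;> split
  · exact add_right_cancel ((ExteriorAlgebra.ι_add_mul_swap _ _).trans (Lam1.add_self _).symm)
  · simp
  · simp
  · simp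

lemma E3_comm_left (i j k : ℕ) : E i * (E j * E k) = E j * (E i * E k) := by
  rw [← mul_assoc, E_mul_comm i j, mul_assoc]

lemma E3_comm_right (i j k : ℕ) : E i * (E j * E k) = E i * (E k * E j) := by
  rw [E_mul_comm j k]

lemma E3_zero (i k : ℕ) : E i * (E i * E k) = 0 := by
  rw [← mul_assoc, E_mul_self, zero_mul]

lemma E3_zero' (i k : ℕ) : E i * (E k * E i) = 0 := by
  rw [E_mul_comm k i, E3_zero]

lemma nat_cast_odd (k : ℕ) : ((2*k+1 : ℕ) : K2) = 1 := by
  push_cast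
  rw [show ((2:K2)) = 0 from by decide]
  ring

lemma δE_odd (k : ℕ) : δE (2*k+1) = ∑ c ∈ Finset.Icc 1 k, E c * E (2*k+1-c) := by
  unfold δE
  have h1 : ∀ a ∈ Finset.Ico 1 (2*k+1),
      (if a < 2*k+1 - a then ((2*k+1 : ℕ) : K2) • (E a * E (2*k+1 - a)) else 0)
        = (if a ≤ k then E a * E (2*k+1-a) else 0) := by
    intro a ha
    simp only [Finset.mem_Ico] at ha
    by_cases hak : a ≤ k
    · rw [if_pos (by omega), if_pos hak, nat_cast_odd, one_smul]
    · rw [if_neg (by omega), if_neg hak]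
  rw [Finset.sum_congr rfl h1]
  have hsub : Finset.Icc 1 k ⊆ Finset.Ico 1 (2*k+1) := by
    intro x hx
    simp only [Finset.mem_Icc] at hx
    simp only [Finset.mem_Ico]
    omega
  have hz : ∀ x ∈ Finset.Ico 1 (2*k+1), x ∉ Finset.Icc 1 k →
      (if x ≤ k then E x * E (2*k+1-x) else 0) = 0 := by
    intro x hx hx2
    simp only [Finset.mem_Ico] at hx
    simp only [Finset.mem_Icc] at hx2
    rw [if_neg (by omega)]
  rw [← Finset.sum_subset hsub hz]
  apply Finset.sum_congr rfl
  intro x hx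
  simp only [Finset.mem_Icc] at hx
  rw [if_pos hx.2]


/-- term function -/
noncomputable def trm (n : ℕ) (x : ℕ × ℕ × ℕ) : Lam1 :=
  if x.1 = 0 then
    if 1 ≤ x.2.2 ∧ x.2.2 ≤ n - x.2.1 then
      E x.2.2 * E (2*(n-x.2.1)+1-x.2.2) * E (2*(n+x.2.1+1)+1) else 0
  else
    if 1 ≤ x.2.2 ∧ x.2.2 ≤ n + x.2.1 + 1 then
      E (2*(n-x.2.1)+1) * (E x.2.2 * E (2*(n+x.2.1+1)+1-x.2.2)) else 0

/-- the pairing involution -/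
def invo (n : ℕ) (x : ℕ × ℕ × ℕ) : ℕ × ℕ × ℕ :=
  if x.1 = 0 then
    if 1 ≤ x.2.2 ∧ x.2.2 ≤ n - x.2.1 then
      if x.2.2 % 2 = 1 then (1, (2*n+1-x.2.2)/2, 2*(n-x.2.1)+1-x.2.2)
      else (1, (2*n+1-(2*(n-x.2.1)+1-x.2.2))/2, x.2.2)
    else x
  else
    if 1 ≤ x.2.2 ∧ x.2.2 ≤ n + x.2.1 + 1 then
      if x.2.2 % 2 = 1 then
        (1, (2*n+1-x.2.2)/2, min (2*(n-x.2.1)+1) (2*(n+x.2.1+1)+1-x.2.2))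
      else
        if 2*n+3 ≤ 2*(n+x.2.1+1)+1-x.2.2 then
          (0, ((2*(n+x.2.1+1)+1-x.2.2) - (2*n+3))/2, min (2*(n-x.2.1)+1) x.2.2)
        else
          (1, (2*n+1-(2*(n+x.2.1+1)+1-x.2.2))/2, min (2*(n-x.2.1)+1) x.2.2)
    else x

-- unfolding lemmas
lemma trm0_eq (n r c : ℕ) (h : 1 ≤ c ∧ c ≤ n - r) :
    trm n (0, r, c) = E c * E (2*(n-r)+1-c) * E (2*(n+r+1)+1) := by
  simp only [trm]; rw [if_true, if_pos h]

lemma trm0_zero (n r c : ℕ) (h : ¬(1 ≤ c ∧ c ≤ n - r)) : trm n (0, r, c) = 0 := by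
  simp only [trm]; rw [if_true, if_neg h]

lemma trm1_eq (n r c : ℕ) (h : 1 ≤ c ∧ c ≤ n + r + 1) :
    trm n (1, r, c) = E (2*(n-r)+1) * (E c * E (2*(n+r+1)+1-c)) := by
  simp only [trm]; rw [if_neg (by omega : ¬((1:ℕ),r,c).1 = 0), if_pos h]

lemma trm1_zero (n r c : ℕ) (h : ¬(1 ≤ c ∧ c ≤ n + r + 1)) : trm n (1, r, c) = 0 := by
  simp only [trm]; rw [if_neg (by omega : ¬((1:ℕ),r,c).1 = 0), if_neg h]

lemma invo0_odd (n r c : ℕ) (h : 1 ≤ c ∧ c ≤ n - r) (hc : c % 2 = 1) :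
    invo n (0, r, c) = (1, (2*n+1-c)/2, 2*(n-r)+1-c) := by
  simp only [invo]; rw [if_true, if_pos h, if_pos hc]

lemma invo0_even (n r c : ℕ) (h : 1 ≤ c ∧ c ≤ n - r) (hc : c % 2 = 0) :
    invo n (0, r, c) = (1, (2*n+1-(2*(n-r)+1-c))/2, c) := by
  simp only [invo]; rw [if_true, if_pos h, if_neg (by omega : ¬ c % 2 = 1)]

lemma invo0_no (n r c : ℕ) (h : ¬(1 ≤ c ∧ c ≤ n - r)) : invo n (0, r, c) = (0, r, c) := by
  simp only [invo]; rw [if_true, if_neg h]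

lemma invo1_odd (n r c : ℕ) (h : 1 ≤ c ∧ c ≤ n + r + 1) (hc : c % 2 = 1) :
    invo n (1, r, c) = (1, (2*n+1-c)/2, min (2*(n-r)+1) (2*(n+r+1)+1-c)) := by
  simp only [invo]; rw [if_neg (by omega : ¬((1:ℕ),r,c).1 = 0), if_pos h, if_pos hc]

lemma invo1_even_hi (n r c : ℕ) (h : 1 ≤ c ∧ c ≤ n + r + 1) (hc : c % 2 = 0)
    (hd : 2*n+3 ≤ 2*(n+r+1)+1-c) :
    invo n (1, r, c) = (0, ((2*(n+r+1)+1-c) - (2*n+3))/2, min (2*(n-r)+1) c) := by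
  simp only [invo]
  rw [if_neg (by omega : ¬((1:ℕ),r,c).1 = 0), if_pos h, if_neg (by omega : ¬ c % 2 = 1),
    if_pos hd]

lemma invo1_even_lo (n r c : ℕ) (h : 1 ≤ c ∧ c ≤ n + r + 1) (hc : c % 2 = 0)
    (hd : ¬ 2*n+3 ≤ 2*(n+r+1)+1-c) :
    invo n (1, r, c) = (1, (2*n+1-(2*(n+r+1)+1-c))/2, min (2*(n-r)+1) c) := by
  simp only [invo]
  rw [if_neg (by omega : ¬((1:ℕ),r,c).1 = 0), if_pos h, if_neg (by omega : ¬ c % 2 = 1),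
    if_neg hd]

lemma invo1_no (n r c : ℕ) (h : ¬(1 ≤ c ∧ c ≤ n + r + 1)) : invo n (1, r, c) = (1, r, c) := by
  simp only [invo]; rw [if_neg (by omega : ¬((1:ℕ),r,c).1 = 0), if_neg h]
-- step lemmas (appended to s2 content for testing)
lemma step0 (n r c : ℕ) (hr : r ≤ n) :
    trm n (0, r, c) + trm n (invo n (0, r, c)) = 0 := by
  by_cases h : 1 ≤ c ∧ c ≤ n - r
  · by_cases hc : c % 2 = 1
    · rw [invo0_odd n r c h hc, trm0_eq n r c h,
        trm1_eq n ((2*n+1-c)/2) (2*(n-r)+1-c) (by omega)]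
      rw [show 2*(n - (2*n+1-c)/2)+1 = c by omega]
      rw [show 2*(n + (2*n+1-c)/2 + 1)+1 - (2*(n-r)+1-c) = 2*(n+r+1)+1 by omega]
      rw [mul_assoc]
      exact Lam1.add_self _
    · rw [invo0_even n r c h (by omega), trm0_eq n r c h,
        trm1_eq n ((2*n+1-(2*(n-r)+1-c))/2) c (by omega)]
      rw [show 2*(n - (2*n+1-(2*(n-r)+1-c))/2)+1 = 2*(n-r)+1-c by omega]
      rw [show 2*(n + (2*n+1-(2*(n-r)+1-c))/2 + 1)+1 - c = 2*(n+r+1)+1 by omega]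
      rw [mul_assoc, E3_comm_left c (2*(n-r)+1-c) (2*(n+r+1)+1)]
      exact Lam1.add_self _
  · rw [invo0_no n r c h]
    simp [trm0_zero n r c h]

lemma step1 (n r c : ℕ) (hr : r ≤ n) :
    trm n (1, r, c) + trm n (invo n (1, r, c)) = 0 := by
  by_cases h : 1 ≤ c ∧ c ≤ n + r + 1
  · by_cases hc : c % 2 = 1
    · rw [invo1_odd n r c h hc, trm1_eq n r c h]
      rcases le_or_gt (2*(n-r)+1) (2*(n+r+1)+1-c) with hjd | hjd
      · rw [min_eq_left hjd, trm1_eq n ((2*n+1-c)/2) (2*(n-r)+1) (by omega)]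
        rw [show 2*(n - (2*n+1-c)/2)+1 = c by omega]
        rw [show 2*(n + (2*n+1-c)/2 + 1)+1 - (2*(n-r)+1) = 2*(n+r+1)+1-c by omega]
        rw [E3_comm_left c (2*(n-r)+1) (2*(n+r+1)+1-c)]
        exact Lam1.add_self _
      · rw [min_eq_right hjd.le, trm1_eq n ((2*n+1-c)/2) (2*(n+r+1)+1-c) (by omega)]
        rw [show 2*(n - (2*n+1-c)/2)+1 = c by omega]
        rw [show 2*(n + (2*n+1-c)/2 + 1)+1 - (2*(n+r+1)+1-c) = 2*(n-r)+1 by omega]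
        rw [E3_comm_right c (2*(n+r+1)+1-c) (2*(n-r)+1)]
        rw [E3_comm_left c (2*(n-r)+1) (2*(n+r+1)+1-c)]
        exact Lam1.add_self _
    · by_cases hhi : 2*n+3 ≤ 2*(n+r+1)+1-c
      · rw [invo1_even_hi n r c h (by omega) hhi, trm1_eq n r c h]
        rcases le_or_gt (2*(n-r)+1) c with hjc | hjc
        · rw [min_eq_left hjc,
            trm0_eq n ((2*(n+r+1)+1-c - (2*n+3))/2) (2*(n-r)+1) (by omega)]
          rw [show 2*(n - (2*(n+r+1)+1-c - (2*n+3))/2)+1 - (2*(n-r)+1) = c by omega]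
          rw [show 2*(n + (2*(n+r+1)+1-c - (2*n+3))/2 + 1)+1 = 2*(n+r+1)+1-c by omega]
          rw [mul_assoc]
          exact Lam1.add_self _
        · rw [min_eq_right hjc.le,
            trm0_eq n ((2*(n+r+1)+1-c - (2*n+3))/2) c (by omega)]
          rw [show 2*(n - (2*(n+r+1)+1-c - (2*n+3))/2)+1 - c = 2*(n-r)+1 by omega]
          rw [show 2*(n + (2*(n+r+1)+1-c - (2*n+3))/2 + 1)+1 = 2*(n+r+1)+1-c by omega]
          rw [mul_assoc, E3_comm_left (2*(n-r)+1) c (2*(n+r+1)+1-c)]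
          exact Lam1.add_self _
      · rw [invo1_even_lo n r c h (by omega) hhi, trm1_eq n r c h]
        rcases le_or_gt (2*(n-r)+1) c with hjc | hjc
        · rw [min_eq_left hjc,
            trm1_eq n ((2*n+1-(2*(n+r+1)+1-c))/2) (2*(n-r)+1) (by omega)]
          rw [show 2*(n - (2*n+1-(2*(n+r+1)+1-c))/2)+1 = 2*(n+r+1)+1-c by omega]
          rw [show 2*(n + (2*n+1-(2*(n+r+1)+1-c))/2 + 1)+1 - (2*(n-r)+1) = c by omega]
          rw [E3_comm_left (2*(n+r+1)+1-c) (2*(n-r)+1) c]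
          rw [E3_comm_right (2*(n-r)+1) (2*(n+r+1)+1-c) c]
          exact Lam1.add_self _
        · rw [min_eq_right hjc.le,
            trm1_eq n ((2*n+1-(2*(n+r+1)+1-c))/2) c (by omega)]
          rw [show 2*(n - (2*n+1-(2*(n+r+1)+1-c))/2)+1 = 2*(n+r+1)+1-c by omega]
          rw [show 2*(n + (2*n+1-(2*(n+r+1)+1-c))/2 + 1)+1 - c = 2*(n-r)+1 by omega]
          rw [E3_comm_left (2*(n+r+1)+1-c) c (2*(n-r)+1)]
          rw [E3_comm_right c (2*(n+r+1)+1-c) (2*(n-r)+1)]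
          rw [E3_comm_left c (2*(n-r)+1) (2*(n+r+1)+1-c)]
          exact Lam1.add_self _
  · rw [invo1_no n r c h]
    simp [trm1_zero n r c h]
lemma step_fix0 (n r c : ℕ) (heq : invo n (0, r, c) = (0, r, c)) : trm n (0, r, c) = 0 := by
  by_cases h : 1 ≤ c ∧ c ≤ n - r
  · by_cases hc : c % 2 = 1
    · rw [invo0_odd n r c h hc] at heq
      simp only [Prod.mk.injEq] at heq
      exact absurd heq.1 (by omega)
    · rw [invo0_even n r c h (by omega)] at heq
      simp only [Prod.mk.injEq] at heq
      exact absurd heq.1 (by omega)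
  · exact trm0_zero n r c h

lemma step_fix1 (n r c : ℕ) (hr : r ≤ n) (heq : invo n (1, r, c) = (1, r, c)) :
    trm n (1, r, c) = 0 := by
  by_cases h : 1 ≤ c ∧ c ≤ n + r + 1
  · by_cases hc : c % 2 = 1
    · rw [invo1_odd n r c h hc] at heq
      simp only [Prod.mk.injEq] at heq
      have h21 := heq.2.1
      have hcj : c = 2*(n-r)+1 := by omega
      rw [trm1_eq n r c h, hcj, E3_zero]
    · by_cases hhi : 2*n+3 ≤ 2*(n+r+1)+1-c
      · rw [invo1_even_hi n r c h (by omega) hhi] at heq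
        simp only [Prod.mk.injEq] at heq
        exact absurd heq.1 (by omega)
      · rw [invo1_even_lo n r c h (by omega) hhi] at heq
        simp only [Prod.mk.injEq] at heq
        have h21 := heq.2.1
        have hdj : 2*(n+r+1)+1-c = 2*(n-r)+1 := by omega
        rw [trm1_eq n r c h, hdj, E3_zero']
  · exact trm1_zero n r c h

lemma invo_mem (n t r c : ℕ) (ht : t ≤ 1) (hr : r ≤ n) (hc : 1 ≤ c ∧ c ≤ 2*n+2) :
    (invo n (t, r, c)).1 ≤ 1 ∧ (invo n (t, r, c)).2.1 ≤ n ∧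
      1 ≤ (invo n (t, r, c)).2.2 ∧ (invo n (t, r, c)).2.2 ≤ 2*n+2 := by
  interval_cases t
  · by_cases h : 1 ≤ c ∧ c ≤ n - r
    · by_cases hcp : c % 2 = 1
      · rw [invo0_odd n r c h hcp]
        dsimp only
        omega
      · rw [invo0_even n r c h (by omega)]
        dsimp only
        omega
    · rw [invo0_no n r c h]
      dsimp only
      omega
  · by_cases h : 1 ≤ c ∧ c ≤ n + r + 1
    · by_cases hcp : c % 2 = 1
      · rw [invo1_odd n r c h hcp]
        dsimp only
        try simp only [inf_eq_min]
        omega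
      · by_cases hhi : 2*n+3 ≤ 2*(n+r+1)+1-c
        · rw [invo1_even_hi n r c h (by omega) hhi]
          dsimp only
          try simp only [inf_eq_min]
          omega
        · rw [invo1_even_lo n r c h (by omega) hhi]
          dsimp only
          try simp only [inf_eq_min]
          omega
    · rw [invo1_no n r c h]
      dsimp only
      omega

lemma invo_invo (n t r c : ℕ) (ht : t ≤ 1) (hr : r ≤ n) (hc : 1 ≤ c ∧ c ≤ 2*n+2) :
    invo n (invo n (t, r, c)) = (t, r, c) := by
  interval_cases t
  · by_cases h : 1 ≤ c ∧ c ≤ n - r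
    · by_cases hcp : c % 2 = 1
      · rw [invo0_odd n r c h hcp,
          invo1_even_hi n ((2*n+1-c)/2) (2*(n-r)+1-c) (by omega) (by omega) (by omega)]
        simp only [Prod.mk.injEq, true_and, and_true]
        try simp only [inf_eq_min]
        omega
      · rw [invo0_even n r c h (by omega),
          invo1_even_hi n ((2*n+1-(2*(n-r)+1-c))/2) c (by omega) (by omega) (by omega)]
        simp only [Prod.mk.injEq, true_and, and_true]
        try simp only [inf_eq_min]
        omega
    · rw [invo0_no n r c h, invo0_no n r c h]
  · by_cases h : 1 ≤ c ∧ c ≤ n + r + 1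
    · by_cases hcp : c % 2 = 1
      · rw [invo1_odd n r c h hcp]
        rcases le_or_gt (2*(n-r)+1) (2*(n+r+1)+1-c) with hjd | hjd
        · rw [min_eq_left hjd,
            invo1_odd n ((2*n+1-c)/2) (2*(n-r)+1) (by omega) (by omega)]
          simp only [Prod.mk.injEq, true_and, and_true]
          try simp only [inf_eq_min]
          omega
        · rw [min_eq_right hjd.le,
            invo1_even_lo n ((2*n+1-c)/2) (2*(n+r+1)+1-c) (by omega) (by omega) (by omega)]
          simp only [Prod.mk.injEq, true_and, and_true]
          try simp only [inf_eq_min]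
          omega
      · by_cases hhi : 2*n+3 ≤ 2*(n+r+1)+1-c
        · rw [invo1_even_hi n r c h (by omega) hhi]
          rcases le_or_gt (2*(n-r)+1) c with hjc | hjc
          · rw [min_eq_left hjc,
              invo0_odd n ((2*(n+r+1)+1-c - (2*n+3))/2) (2*(n-r)+1) (by omega) (by omega)]
            simp only [Prod.mk.injEq, true_and, and_true]
            omega
          · rw [min_eq_right hjc.le,
              invo0_even n ((2*(n+r+1)+1-c - (2*n+3))/2) c (by omega) (by omega)]
            simp only [Prod.mk.injEq, true_and, and_true]
            omega
        · rw [invo1_even_lo n r c h (by omega) hhi]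
          rcases le_or_gt (2*(n-r)+1) c with hjc | hjc
          · rw [min_eq_left hjc,
              invo1_odd n ((2*n+1-(2*(n+r+1)+1-c))/2) (2*(n-r)+1) (by omega) (by omega)]
            simp only [Prod.mk.injEq, true_and, and_true]
            try simp only [inf_eq_min]
            omega
          · rw [min_eq_right hjc.le,
              invo1_even_lo n ((2*n+1-(2*(n+r+1)+1-c))/2) c (by omega) (by omega) (by omega)]
            simp only [Prod.mk.injEq, true_and, and_true]
            try simp only [inf_eq_min]
            omega
    · rw [invo1_no n r c h, invo1_no n r c h]

/-- over `Z/2`, for odd `a ≥ 3`, the 2-cochain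
`ε_{⟨a,a+2⟩} = Σ_{r=0}^{(a−1)/2} e_{a−2r} ∧ e_{a+2r+2}` is a cocycle:
its coboundary (computed by the Leibniz rule) vanishes. -/
theorem eps_aa2_is_cocycle (a : ℕ) (ha : 3 ≤ a) (hodd : Odd a) :
    (∑ r ∈ Finset.range ((a - 1) / 2 + 1),
      (δE (a - 2 * r) * E (a + 2 * r + 2) + E (a - 2 * r) * δE (a + 2 * r + 2))) = 0 := by
  obtain ⟨n, rfl⟩ := hodd
  have hn : 1 ≤ n := by omega
  rw [show (2 * n + 1 - 1) / 2 + 1 = n + 1 by omega]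
  have hstep : ∀ r ∈ Finset.range (n+1),
      δE (2 * n + 1 - 2 * r) * E (2 * n + 1 + 2 * r + 2)
        + E (2 * n + 1 - 2 * r) * δE (2 * n + 1 + 2 * r + 2)
      = (∑ c ∈ Finset.Icc 1 (2*n+2), trm n (0, r, c))
        + (∑ c ∈ Finset.Icc 1 (2*n+2), trm n (1, r, c)) := by
    intro r hr
    simp only [Finset.mem_range] at hr
    rw [show 2 * n + 1 - 2 * r = 2*(n-r)+1 by omega,
      show 2 * n + 1 + 2 * r + 2 = 2*(n+r+1)+1 by omega,
      δE_odd (n-r), δE_odd (n+r+1), Finset.sum_mul, Finset.mul_sum]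
    congr 1
    · have h1 : ∀ c ∈ Finset.Icc 1 (n-r),
          E c * E (2*(n-r)+1-c) * E (2*(n+r+1)+1) = trm n (0, r, c) := by
        intro c hcm
        exact (trm0_eq n r c (Finset.mem_Icc.mp hcm)).symm
      rw [Finset.sum_congr rfl h1]
      refine Finset.sum_subset ?_ ?_
      · intro x hx
        simp only [Finset.mem_Icc] at *
        omega
      · intro x hx hx2
        simp only [Finset.mem_Icc] at hx hx2
        exact trm0_zero n r x (by omega)
    · have h1 : ∀ c ∈ Finset.Icc 1 (n+r+1),
          E (2*(n-r)+1) * (E c * E (2*(n+r+1)+1-c)) = trm n (1, r, c) := by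
        intro c hcm
        exact (trm1_eq n r c (Finset.mem_Icc.mp hcm)).symm
      rw [Finset.sum_congr rfl h1]
      refine Finset.sum_subset ?_ ?_
      · intro x hx
        simp only [Finset.mem_Icc] at *
        omega
      · intro x hx hx2
        simp only [Finset.mem_Icc] at hx hx2
        exact trm1_zero n r x (by omega)
  rw [Finset.sum_congr rfl hstep, Finset.sum_add_distrib]
  have main : ∑ x ∈ (Finset.range 2 ×ˢ Finset.range (n+1) ×ˢ Finset.Icc 1 (2*n+2)),
      trm n x = 0 := by
    refine Finset.sum_involution (fun x _ => invo n x) ?_ ?_ ?_ ?_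
    · rintro ⟨t, r, c⟩ hx
      simp only [Finset.mem_product, Finset.mem_range, Finset.mem_Icc] at hx
      obtain ⟨ht, hr, hc⟩ := hx
      have ht' : t = 0 ∨ t = 1 := by omega
      rcases ht' with rfl | rfl
      · exact step0 n r c (by omega)
      · exact step1 n r c (by omega)
    · rintro ⟨t, r, c⟩ hx hne heq
      simp only [Finset.mem_product, Finset.mem_range, Finset.mem_Icc] at hx
      obtain ⟨ht, hr, hc⟩ := hx
      have ht' : t = 0 ∨ t = 1 := by omega
      rcases ht' with rfl | rfl
      · exact hne (step_fix0 n r c heq)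
      · exact hne (step_fix1 n r c (by omega) heq)
    · rintro ⟨t, r, c⟩ hx
      simp only [Finset.mem_product, Finset.mem_range, Finset.mem_Icc] at hx
      obtain ⟨ht, hr, hc⟩ := hx
      have hm := invo_mem n t r c (by omega) (by omega) hc
      simp only [Finset.mem_product, Finset.mem_range, Finset.mem_Icc]
      exact ⟨by omega, by omega, by omega, by omega⟩
    · rintro ⟨t, r, c⟩ hx
      simp only [Finset.mem_product, Finset.mem_range, Finset.mem_Icc] at hx
      obtain ⟨ht, hr, hc⟩ := hx
      exact invo_invo n t r c (by omega) (by omega) hc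
  simp only [Finset.sum_product] at main
  rw [Finset.sum_range_succ, Finset.sum_range_one] at main
  exact main
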